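/- arXiv:1510.02585 — 2 statements merged into one kernel-verified Lean document; each statement's English description precedes it below -/
import Mathlib

section
/- Let ρ: G → GL(V) be an n-dimensional representation. For 0 < m < n, the exterior power ∧^m V is irreducible as a G-module if and only if ∧^{n−m} V is irreducible as a G-module. -/
open Module ExteriorAlgebra

variable {k G V : Type*} [Field k] [AddCommGroup V] [Module k V] [Group G]

/-- A representation is `m`-thick (with `n = dim V`). -/
def IsMThick (ρ : G →* (V ≃ₗ[k] V)) (n m : ℕ) : Prop :=
  ∀ V₁ V₂ : Submodule k V,
    Module.finrank k V₁ = m → Module.finrank k V₂ = n - m →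
    ∃ g : G, IsCompl (V₁.map (ρ g : V →ₗ[k] V)) V₂

/-- Invariance of a subspace under the representation. -/
def RepInvariant (ρ : G →* (V ≃ₗ[k] V)) (W : Submodule k V) : Prop :=
  ∀ g : G, W.map (ρ g : V →ₗ[k] V) ≤ W

/-- Irreducibility of a representation. -/
def IsIrreducibleRep (ρ : G →* (V ≃ₗ[k] V)) : Prop :=
  Nontrivial V ∧ ∀ W : Submodule k V, RepInvariant ρ W → W = ⊥ ∨ W = ⊤

/-- The induced action on the exterior algebra. -/
noncomputable def extAction (ρ : G →* (V ≃ₗ[k] V)) (g : G) :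
    ExteriorAlgebra k V →ₗ[k] ExteriorAlgebra k V :=
  (ExteriorAlgebra.map (ρ g : V →ₗ[k] V)).toLinearMap

/-- A representation is `m`-dense if the induced representation on `⋀^m V` is irreducible. -/
def IsMDense (ρ : G →* (V ≃ₗ[k] V)) (m : ℕ) : Prop :=
  ∀ W : Submodule k (ExteriorAlgebra k V), W ≤ ⋀[k]^m V →
    (∀ g : G, W.map (extAction ρ g) ≤ W) → W = ⊥ ∨ W = ⋀[k]^m V

/-- A subspace of `⋀^m V` is realizable if it contains a nonzero decomposable vector. -/
def IsRealizable (k : Type*) [Field k] {V : Type*} [AddCommGroup V] [Module k V]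
    (m : ℕ) (W : Submodule k (ExteriorAlgebra k V)) : Prop :=
  ∃ v : Fin m → V, ExteriorAlgebra.ιMulti k m v ≠ 0 ∧ ExteriorAlgebra.ιMulti k m v ∈ W

/-- The perp of a subspace of `⋀^m V` inside `⋀^j V` with respect to the wedge pairing. -/
def wedgePerp (W : Submodule k (ExteriorAlgebra k V)) (j : ℕ) :
    Submodule k (ExteriorAlgebra k V) where
  carrier := {y | y ∈ ⋀[k]^j V ∧ ∀ x ∈ W, x * y = 0}
  add_mem' := by
    rintro a b ⟨ha, ha'⟩ ⟨hb, hb'⟩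
    exact ⟨add_mem ha hb, fun x hx => by rw [mul_add, ha' x hx, hb' x hx, add_zero]⟩
  zero_mem' := ⟨Submodule.zero_mem _, fun x _ => mul_zero x⟩
  smul_mem' := by
    rintro c a ⟨ha, ha'⟩
    exact ⟨Submodule.smul_mem _ c ha, fun x hx => by rw [mul_smul_comm, ha' x hx, smul_zero]⟩

/-!
The wedge product `⋀^c V × ⋀^a V → ⋀^n V ≅ k` (`a + c = n`) is a nondegenerate pairing, and
`G` acts on `⋀ V` by algebra automorphisms, so `W ↦ W^⊥` sends `G`-invariant subspaces of `⋀^c V`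
to `G`-invariant subspaces of `⋀^a V`. If `⋀^a V` is irreducible, then `W^⊥` is `0` or everything:
in the first case `W` is everything, because `dim ⋀^a V = dim ⋀^c V`, and in the second `W = 0`
by nondegeneracy.
-/

namespace ExteriorAlgebra

open Set.powersetCard

variable {R M I : Type*} [CommRing R] [AddCommGroup M] [Module R M]
  [LinearOrder I] [Fintype I]

theorem eq_zero_of_forall_mul_eq_zero (b : Basis I R M) {a c : ℕ}
    (hac : a + c = Fintype.card I) {x : ExteriorAlgebra R M} (hx : x ∈ ⋀[R]^c M)
    (h : ∀ y ∈ ⋀[R]^a M, x * y = 0) : x = 0 := by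
  classical
  lift x to ⋀[R]^c M using hx
  rw [ZeroMemClass.coe_eq_zero, ← (b.exteriorPower c).forall_coord_eq_zero_iff]
  intro S
  -- Of the basis vectors `e T` of `⋀^c M`, only `e S` has a nonzero product with `e Sᶜ`.
  have hdisj : Disjoint S.val (compl hac S).val := by
    simpa only [coe_compl] using disjoint_compl_right
  have hmul : ∀ T ≠ S, b.ExteriorAlgebra T * b.ExteriorAlgebra (compl hac S) = 0 := by
    refine fun T hTS => basis_mul_of_not_disjoint b T _ ?_
    rw [coe_compl, disjoint_compl_right_iff]
    exact fun hTS' => hTS <| Subtype.ext <|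
      Finset.eq_of_subset_of_card_le hTS' (by simp only [card_eq, le_refl])
  have hterm : ∀ T, ((b.exteriorPower c).repr x T • b.exteriorPower c T : ExteriorAlgebra R M) *
      b.ExteriorAlgebra (compl hac S) =
        (b.exteriorPower c).repr x T • (b.ExteriorAlgebra T * b.ExteriorAlgebra (compl hac S)) :=
    fun T => by rw [smul_mul_assoc, ← basis_eq_coe_basis]
  have key := h _ (b.exteriorPower a (compl hac S)).2
  rw [← basis_eq_coe_basis, ← (b.exteriorPower c).sum_repr x, Submodule.coe_sum, Finset.sum_mul,
    Finset.sum_eq_single S (fun T _ hTS => by rw [Submodule.coe_smul, hterm, hmul T hTS, smul_zero])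
      (by simp), Submodule.coe_smul, hterm, basis_mul_of_disjoint _ _ _ hdisj, smul_comm,
    smul_eq_zero_iff_eq] at key
  rw [Basis.coord_apply]
  exact b.ExteriorAlgebra.linearIndependent.smul_left_injective _ (key.trans (zero_smul R _).symm)

end ExteriorAlgebra

section WedgePerp

lemma wedgePerp_le (W : Submodule k (ExteriorAlgebra k V)) (j : ℕ) :
    wedgePerp W j ≤ ⋀[k]^j V :=
  fun _ hy => hy.1

variable {W : Submodule k (ExteriorAlgebra k V)} {a c : ℕ}

/-- `y ↦ (x ↦ x * y)` -/
noncomputable def wedgeRight (hW : W ≤ ⋀[k]^c V) (a : ℕ) :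
    ⋀[k]^a V →ₗ[k] W →ₗ[k] ⋀[k]^(c + a) V :=
  LinearMap.mk₂ k (fun y x => ⟨x * y, SetLike.mul_mem_graded (hW x.2) y.2⟩)
    (fun _ _ _ => by ext; simp [mul_add]) (fun _ _ _ => by ext; simp)
    (fun _ _ _ => by ext; simp [add_mul]) (fun _ _ _ => by ext; simp)

lemma injective_wedgeRight (hW : W ≤ ⋀[k]^c V) (h : wedgePerp W a = ⊥) :
    Function.Injective (wedgeRight hW a) := by
  refine (injective_iff_map_eq_zero _).2 fun y hy => ?_
  have hyP : (y : ExteriorAlgebra k V) ∈ wedgePerp W a :=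
    ⟨y.2, fun x hx => congrArg Subtype.val (LinearMap.congr_fun hy ⟨x, hx⟩)⟩
  rw [h, Submodule.mem_bot] at hyP
  exact Subtype.ext hyP

variable [FiniteDimensional k V]

lemma eq_exteriorPower_of_wedgePerp_eq_bot (hac : a + c = finrank k V) (hW : W ≤ ⋀[k]^c V)
    (h : wedgePerp W a = ⊥) : W = ⋀[k]^c V := by
  have : FiniteDimensional k W := Submodule.finiteDimensional_of_le hW
  refine Submodule.eq_of_le_of_finrank_le hW ?_
  calc finrank k (⋀[k]^c V) = finrank k (⋀[k]^a V) := by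
        rw [exteriorPower.finrank_eq, exteriorPower.finrank_eq, ← hac, Nat.choose_symm_add]
    _ ≤ finrank k (W →ₗ[k] ⋀[k]^(c + a) V) :=
        LinearMap.finrank_le_finrank_of_injective (injective_wedgeRight hW h)
    _ = finrank k W := by
        rw [finrank_linearMap, exteriorPower.finrank_eq, add_comm, hac, Nat.choose_self,
          mul_one]

lemma eq_bot_of_wedgePerp_eq_exteriorPower (hac : a + c = finrank k V) (hW : W ≤ ⋀[k]^c V)
    (h : wedgePerp W a = ⋀[k]^a V) : W = ⊥ := by
  rw [Submodule.eq_bot_iff]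
  intro x hx
  refine eq_zero_of_forall_mul_eq_zero (Module.finBasis k V) (by simpa using hac) (hW hx) ?_
  intro y hy
  exact (h.symm ▸ hy : y ∈ wedgePerp W a).2 x hx

end WedgePerp

section Representation

variable (ρ : G →* (V ≃ₗ[k] V))

lemma extAction_mul_apply (g h : G) (x : ExteriorAlgebra k V) :
    extAction ρ (g * h) x = extAction ρ g (extAction ρ h x) := by
  simp only [extAction, map_mul, AlgHom.toLinearMap_apply]
  rw [← AlgHom.comp_apply, ExteriorAlgebra.map_comp_map]
  rfl

lemma extAction_extAction_inv (g : G) (x : ExteriorAlgebra k V) :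
    extAction ρ g (extAction ρ g⁻¹ x) = x := by
  rw [← extAction_mul_apply, mul_inv_cancel]
  simp [extAction]

lemma extAction_apply_mul (g : G) (x y : ExteriorAlgebra k V) :
    extAction ρ g (x * y) = extAction ρ g x * extAction ρ g y :=
  map_mul (ExteriorAlgebra.map (ρ g : V →ₗ[k] V)) x y

lemma map_extAction_exteriorPower_le (g : G) (j : ℕ) :
    (⋀[k]^j V).map (extAction ρ g) ≤ ⋀[k]^j V := by
  rw [← ιMulti_span_fixedDegree, Submodule.map_span, Submodule.span_le]
  rintro _ ⟨_, ⟨v, rfl⟩, rfl⟩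
  exact Submodule.subset_span ⟨_, (ExteriorAlgebra.map_apply_ιMulti _ v).symm⟩

lemma map_extAction_wedgePerp_le {W : Submodule k (ExteriorAlgebra k V)}
    (hW : ∀ g : G, W.map (extAction ρ g) ≤ W) (j : ℕ) (g : G) :
    (wedgePerp W j).map (extAction ρ g) ≤ wedgePerp W j := by
  rintro _ ⟨y, ⟨hy, hyW⟩, rfl⟩
  refine ⟨map_extAction_exteriorPower_le ρ g j ⟨y, hy, rfl⟩, fun x hx => ?_⟩
  have hx' : extAction ρ g⁻¹ x ∈ W := hW g⁻¹ ⟨x, hx, rfl⟩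
  rw [← extAction_extAction_inv ρ g x, ← extAction_apply_mul, hyW _ hx', map_zero]

theorem IsMDense.of_add_eq_finrank [FiniteDimensional k V] {a c : ℕ}
    (hac : a + c = finrank k V) (hd : IsMDense ρ a) : IsMDense ρ c := by
  intro W hW hWinv
  rcases hd (wedgePerp W a) (wedgePerp_le W a) (map_extAction_wedgePerp_le ρ hWinv a) with h | h
  · exact .inr (eq_exteriorPower_of_wedgePerp_eq_bot hac hW h)
  · exact .inl (eq_bot_of_wedgePerp_eq_exteriorPower hac hW h)

end Representation

theorem mdense_iff_dense_compl_general [FiniteDimensional k V] {n m : ℕ}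
    (hn : Module.finrank k V = n) (hmn : m < n)
    (ρ : G →* (V ≃ₗ[k] V)) :
    IsMDense ρ m ↔ IsMDense ρ (n - m) :=
  ⟨.of_add_eq_finrank ρ (by omega), .of_add_eq_finrank ρ (by omega)⟩

/-- `⋀^m V` is irreducible iff `⋀^(n-m) V` is irreducible. -/
theorem mdense_iff_dense_compl [FiniteDimensional k V] {n m : ℕ}
    (hn : Module.finrank k V = n) (hm0 : 0 < m) (hmn : m < n)
    (ρ : G →* (V ≃ₗ[k] V)) :
    IsMDense ρ m ↔ IsMDense ρ (n - m) :=
  mdense_iff_dense_compl_general hn hmn ρ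
end

section
/- Let ρ: G → GL(V) be an n-dimensional representation and 0 < m < n. Then ρ is not m-thick if and only if there exist G-invariant realizable subspaces W₁ ⊆ ∧^m V and W₂ ⊆ ∧^{n−m} V, both proper and nonzero, such that W₁^⊥ = W₂. -/
open Module ExteriorAlgebra

variable {k G V : Type*} [Field k] [AddCommGroup V] [Module k V] [Group G]

/-! ### Auxiliary lemmas -/

section Aux

open Function Submodule

set_option linter.unusedSectionVars false

theorem aux_ιMulti_append {a c : ℕ} (u : Fin a → V) (w : Fin c → V) :
    ιMulti k (a + c) (Fin.append u w) = ιMulti k a u * ιMulti k c w := by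
  rw [ιMulti_apply, ιMulti_apply, ιMulti_apply, ← List.prod_append]
  congr 1
  rw [List.ofFn_add]
  simp [Fin.append_left, Fin.append_right]

theorem aux_indep_append_comm {a c : ℕ} {u : Fin a → V} {w : Fin c → V}
    (h : LinearIndependent k (Fin.append u w)) :
    LinearIndependent k (Fin.append w u) := by
  have he : Fin.append u w ∘ (finAddFlip : Fin (c + a) ≃ Fin (a + c)) = Fin.append w u := by
    funext i
    refine Fin.addCases (fun i => ?_) (fun i => ?_) i <;>
      simp [finAddFlip_apply_castAdd, finAddFlip_apply_natAdd]
  rw [← he]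
  exact h.comp _ (Equiv.injective _)

/-- liftAlternating functional extracting the top coefficient. -/
noncomputable def auxDualTop {nn : ℕ} (b : Basis (Fin nn) k V) :
    ExteriorAlgebra k V →ₗ[k] k :=
  liftAlternating fun i =>
    if h : i = nn then (b.det).domDomCongr (finCongr h.symm) else 0

theorem auxDualTop_ιMulti {nn : ℕ} (b : Basis (Fin nn) k V) (v : Fin nn → V) :
    auxDualTop b (ιMulti k nn v) = b.det v := by
  rw [auxDualTop, liftAlternating_apply_ιMulti, dif_pos rfl]
  simp [AlternatingMap.domDomCongr_apply]

theorem aux_ιMulti_ne_zero_top [FiniteDimensional k V] {nn : ℕ}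
    (hn : nn = finrank k V) {f : Fin nn → V} (hf : LinearIndependent k f) :
    ιMulti k nn f ≠ 0 := by
  rcases Nat.eq_zero_or_pos nn with h0 | h0
  · subst h0
    rw [ιMulti_zero_apply]
    exact one_ne_zero
  · haveI : Nonempty (Fin nn) := ⟨⟨0, h0⟩⟩
    have hcard : Fintype.card (Fin nn) = finrank k V := by simpa using hn
    set b := basisOfLinearIndependentOfCardEqFinrank hf hcard with hb
    have hbf : ⇑b = f := coe_basisOfLinearIndependentOfCardEqFinrank hf hcard
    intro h
    have := auxDualTop_ιMulti b f
    rw [h, map_zero] at this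
    rw [← hbf, b.det_self] at this
    exact one_ne_zero this.symm

theorem aux_linearIndependent_of_ιMulti_ne_zero {a : ℕ} {f : Fin a → V}
    (h : ιMulti k a f ≠ 0) : LinearIndependent k f := by
  by_contra hdep
  exact h ((ιMulti k a).map_linearDependent f hdep)

theorem aux_exists_append_indep [FiniteDimensional k V] {a : ℕ} (c : ℕ)
    (hac : a + c ≤ finrank k V) {f : Fin a → V} (hf : LinearIndependent k f) :
    ∃ u : Fin c → V, LinearIndependent k (Fin.append f u) := by
  induction c with
  | zero =>
    exact ⟨Fin.elim0, by rw [Fin.append_elim0]; exact hf.comp _ (Fin.cast_injective _)⟩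
  | succ c ih =>
    obtain ⟨u, hu⟩ := ih (by omega)
    classical
    have hlt : finrank k (span k (Set.range (Fin.append f u))) < finrank k (⊤ : Submodule k V) := by
      have h1 := finrank_range_le_card (R := k) (Fin.append f u)
      rw [Set.finrank] at h1
      rw [finrank_top]
      simp only [Fintype.card_fin] at h1
      omega
    have hne : span k (Set.range (Fin.append f u)) ≠ ⊤ := fun h => by
      rw [h] at hlt; exact lt_irrefl _ hlt
    obtain ⟨x, hx⟩ : ∃ x, x ∉ span k (Set.range (Fin.append f u)) := by
      by_contra hc
      push_neg at hc
      exact hne (eq_top_iff'.2 hc)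
    refine ⟨Fin.snoc u x, ?_⟩
    rw [Fin.append_snoc]
    exact linearIndependent_fin_snoc.2 ⟨hu, hx⟩

theorem aux_ιMulti_ne_zero [FiniteDimensional k V] {a : ℕ} (ha : a ≤ finrank k V)
    {f : Fin a → V} (hf : LinearIndependent k f) : ιMulti k a f ≠ 0 := by
  obtain ⟨u, hu⟩ := aux_exists_append_indep (finrank k V - a) (by omega) hf
  have h2 := aux_ιMulti_ne_zero_top (by omega) hu
  rw [aux_ιMulti_append] at h2
  intro h
  rw [h, zero_mul] at h2
  exact h2 rfl

theorem aux_range_fin_append {a c : ℕ} (u : Fin a → V) (w : Fin c → V) :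
    Set.range (Fin.append u w) = Set.range u ∪ Set.range w := by
  ext x
  constructor
  · rintro ⟨i, rfl⟩
    refine Fin.addCases (fun i => ?_) (fun i => ?_) i
    · rw [Fin.append_left]; exact Or.inl ⟨i, rfl⟩
    · rw [Fin.append_right]; exact Or.inr ⟨i, rfl⟩
  · rintro (⟨i, rfl⟩ | ⟨i, rfl⟩)
    · exact ⟨Fin.castAdd c i, Fin.append_left u w i⟩
    · exact ⟨Fin.natAdd a i, Fin.append_right u w i⟩

theorem aux_wedge_ne_zero_of_isCompl [FiniteDimensional k V] {a c : ℕ}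
    (hac : a + c = finrank k V) {u : Fin a → V} {w : Fin c → V}
    (h : IsCompl (span k (Set.range u)) (span k (Set.range w))) :
    ιMulti k a u * ιMulti k c w ≠ 0 := by
  rw [← aux_ιMulti_append]
  have htop : ⊤ ≤ span k (Set.range (Fin.append u w)) := by
    rw [aux_range_fin_append, span_union, codisjoint_iff.1 h.2]
  have hind : LinearIndependent k (Fin.append u w) :=
    linearIndependent_of_top_le_span_of_card_eq_finrank htop (by simpa using hac)
  exact aux_ιMulti_ne_zero_top hac hind

theorem aux_isCompl_of_wedge_ne_zero [FiniteDimensional k V] {a c : ℕ}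
    (hac : a + c = finrank k V) {u : Fin a → V} {w : Fin c → V}
    (hne : ιMulti k a u * ιMulti k c w ≠ 0) :
    IsCompl (span k (Set.range u)) (span k (Set.range w)) := by
  rw [← aux_ιMulti_append] at hne
  have hind : LinearIndependent k (Fin.append u w) := by
    by_contra hdep
    exact hne ((ιMulti k (a + c)).map_linearDependent _ hdep)
  have hu : LinearIndependent k u := by
    have := hind.comp (Fin.castAdd c) (Fin.castAdd_injective a c)
    simpa [Function.comp_def, Fin.append_left] using this
  have hw : LinearIndependent k w := by
    have := hind.comp (Fin.natAdd a) (fun i j hij => by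
      rw [Fin.ext_iff] at hij ⊢; simp only [Fin.coe_natAdd] at hij; omega)
    simpa [Function.comp_def, Fin.append_right] using this
  have hsup : span k (Set.range u) ⊔ span k (Set.range w) = ⊤ := by
    rw [← span_union, ← aux_range_fin_append]
    apply Submodule.eq_top_of_finrank_eq
    rw [finrank_span_eq_card hind]
    simpa using hac
  have hfr : finrank k (span k (Set.range u)) + finrank k (span k (Set.range w))
      = finrank k V := by
    rw [finrank_span_eq_card hu, finrank_span_eq_card hw]
    simpa using hac
  have hd := Submodule.finrank_sup_add_finrank_inf_eq (span k (Set.range u))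
    (span k (Set.range w))
  rw [hsup, finrank_top, hfr] at hd
  have hinf : span k (Set.range u) ⊓ span k (Set.range w) = ⊥ :=
    Submodule.finrank_eq_zero.1 (by omega)
  exact ⟨disjoint_iff.2 hinf, codisjoint_iff.2 hsup⟩

theorem aux_span_range_coe_basis {S : Submodule k V} {ι : Type*} (b : Basis ι k S) :
    span k (Set.range fun i => (b i : V)) = S := by
  have h : (Set.range fun i => ((b i : V))) = S.subtype '' (Set.range b) := by
    rw [← Set.range_comp]; rfl
  rw [h, Submodule.span_image, b.span_eq, Submodule.map_top,
    Submodule.range_subtype]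

theorem aux_span_range_comp_map (f : V →ₗ[k] V) {a : ℕ} (u : Fin a → V) :
    span k (Set.range (⇑f ∘ u)) = (span k (Set.range u)).map f := by
  rw [Set.range_comp, Submodule.span_image]

theorem extAction_mul (ρ : G →* (V ≃ₗ[k] V)) (g : G) (x y : ExteriorAlgebra k V) :
    extAction ρ g (x * y) = extAction ρ g x * extAction ρ g y :=
  map_mul (ExteriorAlgebra.map (ρ g : V →ₗ[k] V)) x y

theorem extAction_extAction (ρ : G →* (V ≃ₗ[k] V)) (g h : G) (x : ExteriorAlgebra k V) :
    extAction ρ g (extAction ρ h x) = extAction ρ (g * h) x := by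
  have hcomp : (ρ g : V →ₗ[k] V) ∘ₗ (ρ h : V →ₗ[k] V) = (ρ (g * h) : V →ₗ[k] V) := by
    ext v; simp [map_mul]
  have := ExteriorAlgebra.map_comp_map (R := k) (ρ h : V →ₗ[k] V) (ρ g : V →ₗ[k] V)
  rw [hcomp] at this
  exact congrArg (fun f => AlgHom.toLinearMap f x) this

theorem extAction_one (ρ : G →* (V ≃ₗ[k] V)) (x : ExteriorAlgebra k V) :
    extAction ρ 1 x = x := by
  have h1 : (ρ 1 : V →ₗ[k] V) = LinearMap.id := by ext v; simp
  show ExteriorAlgebra.map (ρ 1 : V →ₗ[k] V) x = x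
  rw [h1, ExteriorAlgebra.map_id]
  rfl

theorem extAction_ιMulti (ρ : G →* (V ≃ₗ[k] V)) (g : G) {a : ℕ} (v : Fin a → V) :
    extAction ρ g (ιMulti k a v) = ιMulti k a (⇑(ρ g) ∘ v) :=
  ExteriorAlgebra.map_apply_ιMulti _ _

theorem extAction_power_le (ρ : G →* (V ≃ₗ[k] V)) (g : G) (j : ℕ) :
    (⋀[k]^j V).map (extAction ρ g) ≤ ⋀[k]^j V := by
  rw [← ιMulti_span_fixedDegree, Submodule.map_span, ← Set.range_comp]
  refine span_le.2 ?_
  rintro _ ⟨v, rfl⟩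
  exact subset_span ⟨⇑(ρ g) ∘ v, (extAction_ιMulti ρ g v).symm⟩

theorem mem_wedgePerp {W : Submodule k (ExteriorAlgebra k V)} {j : ℕ}
    {y : ExteriorAlgebra k V} :
    y ∈ wedgePerp W j ↔ y ∈ ⋀[k]^j V ∧ ∀ x ∈ W, x * y = 0 := Iff.rfl

theorem wedgePerp_map_le (ρ : G →* (V ≃ₗ[k] V)) {W : Submodule k (ExteriorAlgebra k V)}
    (hW : ∀ g : G, W.map (extAction ρ g) ≤ W) (j : ℕ) (g : G) :
    (wedgePerp W j).map (extAction ρ g) ≤ wedgePerp W j := by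
  rintro _ ⟨y, hy, rfl⟩
  rw [SetLike.mem_coe] at hy
  rw [mem_wedgePerp] at hy ⊢
  refine ⟨extAction_power_le ρ g j ⟨y, hy.1, rfl⟩, ?_⟩
  intro x hx
  have hx' : extAction ρ g⁻¹ x ∈ W := hW g⁻¹ ⟨x, hx, rfl⟩
  have h0 := hy.2 _ hx'
  have heq : x * extAction ρ g y = extAction ρ g (extAction ρ g⁻¹ x * y) := by
    rw [extAction_mul, extAction_extAction, mul_inv_cancel, extAction_one]
  rw [heq, h0, map_zero]

end Aux

section Main

open Function Submodule

/-- ρ is not m-thick iff there are G-invariant realizable subspaces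
`W₁ ⊆ ⋀^m V`, `W₂ ⊆ ⋀^(n-m) V`, both nonzero and proper, with `W₁^⊥ = W₂`. -/
theorem not_mthick_iff_realizable_perp [FiniteDimensional k V] {n m : ℕ}
    (hn : Module.finrank k V = n) (hm0 : 0 < m) (hmn : m < n)
    (ρ : G →* (V ≃ₗ[k] V)) :
    ¬ IsMThick ρ n m ↔
      ∃ W₁ W₂ : Submodule k (ExteriorAlgebra k V),
        W₁ ≤ ⋀[k]^m V ∧ (∀ g : G, W₁.map (extAction ρ g) ≤ W₁) ∧
        IsRealizable k m W₁ ∧ W₁ ≠ ⊥ ∧ W₁ ≠ ⋀[k]^m V ∧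
        (∀ g : G, W₂.map (extAction ρ g) ≤ W₂) ∧
        IsRealizable k (n - m) W₂ ∧ W₂ ≠ ⊥ ∧ W₂ ≠ ⋀[k]^(n - m) V ∧
        wedgePerp W₁ (n - m) = W₂ := by
  subst hn
  have hac : m + (finrank k V - m) = finrank k V := by omega
  constructor
  · -- forward direction
    intro hnt
    rw [IsMThick] at hnt
    push_neg at hnt
    obtain ⟨V₁, V₂, h1, h2, hg⟩ := hnt
    -- basis families for V₁ and V₂
    have hu : LinearIndependent k (fun i => ((finBasisOfFinrankEq k V₁ h1) i : V)) := by
      have := (finBasisOfFinrankEq k V₁ h1).linearIndependent.map' V₁.subtype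
        (Submodule.ker_subtype V₁)
      simpa [Function.comp_def] using this
    set u : Fin m → V := fun i => ((finBasisOfFinrankEq k V₁ h1) i : V) with hu_def
    have hspan_u : span k (Set.range u) = V₁ := aux_span_range_coe_basis _
    have hw : LinearIndependent k
        (fun i => ((finBasisOfFinrankEq k V₂ h2) i : V)) := by
      have := (finBasisOfFinrankEq k V₂ h2).linearIndependent.map' V₂.subtype
        (Submodule.ker_subtype V₂)
      simpa [Function.comp_def] using this
    set w : Fin (finrank k V - m) → V := fun i => ((finBasisOfFinrankEq k V₂ h2) i : V)
      with hw_def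
    have hspan_w : span k (Set.range w) = V₂ := aux_span_range_coe_basis _
    set x₁ : ExteriorAlgebra k V := ιMulti k m u with hx₁_def
    have hx₁ : x₁ ≠ 0 := aux_ιMulti_ne_zero (by omega) hu
    set y₂ : ExteriorAlgebra k V := ιMulti k (finrank k V - m) w with hy₂_def
    have hy₂ : y₂ ≠ 0 := aux_ιMulti_ne_zero (by omega) hw
    set W₁ : Submodule k (ExteriorAlgebra k V) :=
      span k (Set.range fun g : G => extAction ρ g x₁) with hW₁_def
    -- the orbit pairs to zero with y₂
    have horb : ∀ g : G, ιMulti k m (⇑((ρ g : V ≃ₗ[k] V) : V →ₗ[k] V) ∘ u) * y₂ = 0 := by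
      intro g
      by_contra hne
      apply hg g
      have hc := aux_isCompl_of_wedge_ne_zero hac hne
      rwa [aux_span_range_comp_map, hspan_u, hspan_w] at hc
    have hW₁_le : W₁ ≤ ⋀[k]^m V := by
      rw [hW₁_def, span_le]
      rintro _ ⟨g, rfl⟩
      beta_reduce
      rw [hx₁_def, extAction_ιMulti]
      exact ιMulti_range k m ⟨_, rfl⟩
    have hW₁_inv : ∀ g : G, W₁.map (extAction ρ g) ≤ W₁ := by
      intro g
      rw [hW₁_def, Submodule.map_span, span_le]
      rintro _ ⟨_, ⟨h, rfl⟩, rfl⟩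
      beta_reduce
      rw [extAction_extAction]
      exact subset_span ⟨g * h, rfl⟩
    have hx₁W : x₁ ∈ W₁ := by
      rw [hW₁_def]
      exact subset_span ⟨1, extAction_one ρ x₁⟩
    have hy₂W : y₂ ∈ wedgePerp W₁ (finrank k V - m) := by
      rw [mem_wedgePerp]
      refine ⟨ιMulti_range k _ ⟨_, rfl⟩, ?_⟩
      intro x hx
      rw [hW₁_def] at hx
      induction hx using Submodule.span_induction with
      | mem x hmem =>
        obtain ⟨g, rfl⟩ := hmem
        beta_reduce
        rw [hx₁_def, extAction_ιMulti]
        exact horb g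
      | zero => exact zero_mul _
      | add x y hx hy ihx ihy => rw [add_mul, ihx, ihy, add_zero]
      | smul c x hx ihx => rw [smul_mul_assoc, ihx, smul_zero]
    refine ⟨W₁, wedgePerp W₁ (finrank k V - m), hW₁_le, hW₁_inv, ⟨u, hx₁, hx₁W⟩, ?_, ?_,
      wedgePerp_map_le ρ hW₁_inv _, ⟨w, hy₂, hy₂W⟩, ?_, ?_, rfl⟩
    · -- W₁ ≠ ⊥
      intro hbot
      rw [hbot] at hx₁W
      exact hx₁ (by simpa using hx₁W)
    · -- W₁ ≠ ⋀^m V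
      intro htop
      obtain ⟨w', hww'⟩ := aux_exists_append_indep (finrank k V - (finrank k V - m))
        (by omega) hw
      have hfl := aux_indep_append_comm hww'
      have hprod : ιMulti k (finrank k V - (finrank k V - m)) w' * y₂ ≠ 0 := by
        rw [hy₂_def, ← aux_ιMulti_append]
        exact aux_ιMulti_ne_zero_top (by omega) hfl
      have hpow : (⋀[k]^(finrank k V - (finrank k V - m)) V) = ⋀[k]^m V := by
        rw [show finrank k V - (finrank k V - m) = m from by omega]
      have hxmem : ιMulti k (finrank k V - (finrank k V - m)) w' ∈ W₁ := by
        rw [htop, ← hpow]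
        exact ιMulti_range k _ ⟨_, rfl⟩
      exact hprod ((mem_wedgePerp.1 hy₂W).2 _ hxmem)
    · -- W₂ ≠ ⊥
      intro hbot
      rw [hbot] at hy₂W
      exact hy₂ (by simpa using hy₂W)
    · -- W₂ ≠ ⋀^(n-m) V
      intro htop
      obtain ⟨u', huu'⟩ := aux_exists_append_indep (finrank k V - m) (by omega) hu
      have hprod : x₁ * ιMulti k (finrank k V - m) u' ≠ 0 := by
        rw [hx₁_def, ← aux_ιMulti_append]
        exact aux_ιMulti_ne_zero_top (by omega) huu'
      have humem : ιMulti k (finrank k V - m) u' ∈ wedgePerp W₁ (finrank k V - m) := by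
        rw [htop]
        exact ιMulti_range k _ ⟨_, rfl⟩
      exact hprod ((mem_wedgePerp.1 humem).2 _ hx₁W)
  · -- backward direction
    rintro ⟨W₁, W₂, hW₁le, hW₁inv, ⟨v, hv0, hvW⟩, -, -, -, ⟨w, hw0, hwW⟩, -, -, hperp⟩ hthick
    have hv := aux_linearIndependent_of_ιMulti_ne_zero hv0
    have hw := aux_linearIndependent_of_ιMulti_ne_zero hw0
    obtain ⟨g, hg⟩ := hthick (span k (Set.range v)) (span k (Set.range w))
      (by rw [finrank_span_eq_card hv]; simp)
      (by rw [finrank_span_eq_card hw]; simp)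
    rw [← aux_span_range_comp_map] at hg
    have hne := aux_wedge_ne_zero_of_isCompl hac hg
    apply hne
    have hmem : ιMulti k m (⇑((ρ g : V ≃ₗ[k] V) : V →ₗ[k] V) ∘ v) ∈ W₁ :=
      hW₁inv g ⟨_, hvW, extAction_ιMulti ρ g v⟩
    have hwW2 : ιMulti k (finrank k V - m) w ∈ wedgePerp W₁ (finrank k V - m) := by
      rw [hperp]; exact hwW
    exact (mem_wedgePerp.1 hwW2).2 _ hmem

end Main
end
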